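/- The (q,b)-Lucas polynomials L_n(x,b,s,q), defined by L_0 = 1−b, L_1 = x, L_n(x,b,s,q) = x·L_{n-1}(x,qb,qs,q) + (qs/((1-qb)(1-q²b)))·L_{n-2}(x,q²b,q²s,q), also satisfy the fixed-parameter recursion L_n(x,b,s,q) = x·L_{n-1}(x,b,s,q) + (q^{n-1}s/((1-q^{n-2}b)(1-q^{n-1}b)))·L_{n-2}(x,b,s,q) for n ≥ 2. -/

import Mathlib

open Finset

noncomputable section

/-- The field `ℚ(q,b,s,x)` of rational functions. -/
abbrev K : Type := FractionRing (MvPolynomial (Fin 4) ℚ)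

def q : K := algebraMap (MvPolynomial (Fin 4) ℚ) K (MvPolynomial.X 0)
def b : K := algebraMap (MvPolynomial (Fin 4) ℚ) K (MvPolynomial.X 1)
def s : K := algebraMap (MvPolynomial (Fin 4) ℚ) K (MvPolynomial.X 2)
def x : K := algebraMap (MvPolynomial (Fin 4) ℚ) K (MvPolynomial.X 3)

/-- The q-Pochhammer symbol `(a;q)_n = ∏_{j=0}^{n-1} (1 - q^j a)`. -/
def qPoch (a : K) (n : ℕ) : K := ∏ j ∈ range n, (1 - q ^ j * a)


/-- The (q,b)-Lucas polynomials `L n b s`, defined by `L 0 = 1 - b`, `L 1 = x` and the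
parameter-shifting recursion (3.5). -/
def qbLucas : ℕ → K → K → K
  | 0, b, _ => 1 - b
  | 1, _, _ => x
  | (n + 2), b, s =>
      x * qbLucas (n + 1) (q * b) (q * s) +
        (q * s / ((1 - q * b) * (1 - q ^ 2 * b))) * qbLucas n (q ^ 2 * b) (q ^ 2 * s)

/-!
The recursion defining `L_n(b, s)` moves the parameters to `(qb, qs)` and `(q²b, q²s)`, while the
coefficient `c_n(b, s) = q^{n-1} s / ((1 - q^{n-2} b)(1 - q^{n-1} b))` of the fixed-parameter
recursion satisfies `c_{n-1}(qb, qs) = c_{n-2}(q²b, q²s) = c_n(b, s)`. Hence, once the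
fixed-parameter recursion is known for `L_{n-1}(qb, qs)` and `L_{n-2}(q²b, q²s)`, substituting it
into the defining recursion of `L_n(b, s)` and regrouping gives it for `L_n(b, s)`: the induction
runs over all parameters `(b, s)` at once, with `n = 2, 3` checked by hand.
-/

lemma one_sub_q_pow_mul_b_ne_zero (k : ℕ) : (1 : K) - q ^ k * b ≠ 0 := by
  have hpoly : (1 - MvPolynomial.X 0 ^ k * MvPolynomial.X 1 : MvPolynomial (Fin 4) ℚ) ≠ 0 :=
    fun h => by simpa using congrArg (MvPolynomial.eval 0) h
  simpa [q, b] using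
    (map_ne_zero_iff _ (IsFractionRing.injective (MvPolynomial (Fin 4) ℚ) K)).mpr hpoly

/-- The coefficient `c_{n+2}(b, s)`. -/
def qbLucasFixedCoeff (n : ℕ) (b s : K) : K :=
  q ^ (n + 1) * s / ((1 - q ^ n * b) * (1 - q ^ (n + 1) * b))

lemma qbLucasFixedCoeff_shift_one (n : ℕ) (b s : K) :
    qbLucasFixedCoeff n (q * b) (q * s) = qbLucasFixedCoeff (n + 1) b s := by
  unfold qbLucasFixedCoeff
  ring

lemma qbLucasFixedCoeff_shift_two (n : ℕ) (b s : K) :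
    qbLucasFixedCoeff n (q ^ 2 * b) (q ^ 2 * s) = qbLucasFixedCoeff (n + 2) b s := by
  unfold qbLucasFixedCoeff
  ring

lemma qbLucas_add_two (n : ℕ) (b s : K) :
    qbLucas (n + 2) b s = x * qbLucas (n + 1) (q * b) (q * s) +
      (q * s / ((1 - q * b) * (1 - q ^ 2 * b))) * qbLucas n (q ^ 2 * b) (q ^ 2 * s) :=
  rfl

theorem qbLucas_add_two_eq_fixed (n : ℕ) (b s : K) (hb : ∀ k : ℕ, 1 - q ^ k * b ≠ 0) :
    qbLucas (n + 2) b s = x * qbLucas (n + 1) b s + qbLucasFixedCoeff n b s * qbLucas n b s := by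
  induction n using Nat.twoStepInduction generalizing b s with
  | zero =>
    have h0 : (1 : K) - b ≠ 0 := by simpa using hb 0
    have h1 : (1 : K) - q * b ≠ 0 := by simpa using hb 1
    have h2 := hb 2
    simp only [qbLucas, qbLucasFixedCoeff, pow_zero, one_mul, zero_add, pow_one]
    field_simp
  | one =>
    have h1 : (1 : K) - q * b ≠ 0 := by simpa using hb 1
    have h2 := hb 2
    have h3 := hb 3
    simp only [qbLucas, qbLucasFixedCoeff, ← mul_assoc, ← sq, ← pow_succ, Nat.reduceAdd, pow_one]
    field_simp
    ring
  | more n ih ih' =>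
    have hqb : ∀ k : ℕ, 1 - q ^ k * (q * b) ≠ 0 := fun k => by
      simpa [← mul_assoc, ← pow_succ] using hb (k + 1)
    have hq2b : ∀ k : ℕ, 1 - q ^ k * (q ^ 2 * b) ≠ 0 := fun k => by
      simpa [← mul_assoc, ← pow_add] using hb (k + 2)
    rw [qbLucas_add_two, ih' _ _ hqb, ih _ _ hq2b, qbLucasFixedCoeff_shift_one,
      qbLucasFixedCoeff_shift_two, show n + 2 + 1 = n + 1 + 2 from rfl,
      qbLucas_add_two (n + 1) b s, qbLucas_add_two n b s]
    ring

/-- The (q,b)-Lucas polynomials also satisfy the fixed-parameter recursion (3.8). -/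
theorem qbLucas_fixed_recursion (n : ℕ) (hn : 2 ≤ n) :
    qbLucas n b s = x * qbLucas (n - 1) b s +
      (q ^ (n - 1) * s / ((1 - q ^ (n - 2) * b) * (1 - q ^ (n - 1) * b))) *
        qbLucas (n - 2) b s := by
  obtain ⟨m, rfl⟩ := Nat.exists_eq_add_of_le' hn
  exact qbLucas_add_two_eq_fixed m b s one_sub_q_pow_mul_b_ne_zero

end
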